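/- Let A be a finite-dimensional left Leibniz algebra, U a right-subnormal subalgebra of A, V an ideal of U contained in the Frattini subalgebra Φ(A), and suppose U/V is nilpotent. Then U is nilpotent. -/

import Mathlib

/-!
For `u ∈ U`, walking down the subnormal chain gives `L_u^k(A) ⊆ U`, hence
`L_u^{k+r}(A) ⊆ U^{r+1} ⊆ V ⊆ Φ(A)`. As `L_u` is a derivation, its Fitting null component
`E_A(u) = ker L_u^m` (`m` large) is a subalgebra with `A = L_u^m(A) + E_A(u)`. Elements of the
Frattini subalgebra are non-generators, so `E_A(u) = A`: every `L_u` is nilpotent. By the Leibniz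
identity the `L_u` restricted to `U` form a Lie algebra of endomorphisms of `U`, and Engel's
theorem makes `U` nilpotent.
-/

/-- Lower central series of the subalgebra `U`: `U¹ = U`, `U^{k+1} = U·Uᵏ`. -/
def lcsIn {F A : Type*} [Field F] [AddCommGroup A] [Module F A]
    (mul : A →ₗ[F] A →ₗ[F] A) (U : Submodule F A) : ℕ → Submodule F A
  | 0 => U
  | k + 1 => Submodule.span F {x : A | ∃ a ∈ U, ∃ b ∈ lcsIn mul U k, x = mul a b}

def IsMaxSubalg {F A : Type*} [Field F] [AddCommGroup A] [Module F A]
    (mul : A →ₗ[F] A →ₗ[F] A) (U : Submodule F A) : Prop :=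
  (∀ u ∈ U, ∀ v ∈ U, mul u v ∈ U) ∧ U ≠ ⊤ ∧
    ∀ V : Submodule F A, (∀ u ∈ V, ∀ v ∈ V, mul u v ∈ V) → U < V → V = ⊤

namespace LeibnizAlgebra

variable {F A : Type*} [Field F] [AddCommGroup A] [Module F A] (mul : A →ₗ[F] A →ₗ[F] A)

section LowerCentralSeries

variable {U : Submodule F A}

lemma mul_mem_lcsIn_succ {j : ℕ} {a b : A} (ha : a ∈ U) (hb : b ∈ lcsIn mul U j) :
    mul a b ∈ lcsIn mul U (j + 1) :=
  Submodule.subset_span ⟨a, ha, b, hb, rfl⟩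

lemma lcsIn_succ_le {j : ℕ} {W : Submodule F A}
    (h : ∀ a ∈ U, ∀ b ∈ lcsIn mul U j, mul a b ∈ W) : lcsIn mul U (j + 1) ≤ W := by
  rw [lcsIn, Submodule.span_le]
  rintro _ ⟨a, ha, b, hb, rfl⟩
  exact h a ha b hb

lemma pow_apply_mem_lcsIn {u x : A} (hu : u ∈ U) (hx : x ∈ U) :
    ∀ j, ((mul u) ^ j) x ∈ lcsIn mul U j
  | 0 => hx
  | j + 1 => by
    rw [pow_succ', Module.End.mul_apply]
    exact mul_mem_lcsIn_succ mul hu (pow_apply_mem_lcsIn hu hx j)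

end LowerCentralSeries

lemma pow_apply_mem_of_rightIdeal_chain {k : ℕ} {c : ℕ → Submodule F A}
    (hc : ∀ i < k, c (i + 1) ≤ c i ∧ ∀ x ∈ c (i + 1), ∀ y ∈ c i, mul x y ∈ c (i + 1))
    {u x : A} (hu : u ∈ c k) (hx : x ∈ c 0) : ∀ i ≤ k, ((mul u) ^ i) x ∈ c i
  | 0, _ => hx
  | i + 1, hi => by
    have hu' : u ∈ c (i + 1) :=
      Nat.decreasingInduction (motive := fun j _ => u ∈ c j) (fun j hj h => (hc j hj).1 h) hu hi
    rw [pow_succ', Module.End.mul_apply]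
    exact (hc i hi).2 u hu' _ (pow_apply_mem_of_rightIdeal_chain hc hu hx i (by omega))

section Derivation

variable {mul} {f : Module.End F A}

lemma pow_add_apply_mul_eq_zero (hf : ∀ a b, f (mul a b) = mul (f a) b + mul a (f b))
    {a b : A} {p q : ℕ} (ha : (f ^ p) a = 0) (hb : (f ^ q) b = 0) :
    (f ^ (p + q)) (mul a b) = 0 := by
  induction p generalizing a q b with
  | zero => simp_all
  | succ p ihp =>
    induction q generalizing b with
    | zero => simp_all
    | succ q ihq =>
      rw [show p + 1 + (q + 1) = p + (q + 1) + 1 by omega, pow_succ, Module.End.mul_apply, hf,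
        map_add, ihp (by rwa [← Module.End.mul_apply, ← pow_succ]) hb, zero_add,
        show p + (q + 1) = p + 1 + q by omega]
      exact ihq (by rwa [← Module.End.mul_apply, ← pow_succ])

lemma mul_mem_ker_pow (hf : ∀ a b, f (mul a b) = mul (f a) b + mul a (f b)) {n : ℕ}
    (hn : LinearMap.ker (f ^ (n + n)) = LinearMap.ker (f ^ n)) {a b : A}
    (ha : a ∈ LinearMap.ker (f ^ n)) (hb : b ∈ LinearMap.ker (f ^ n)) :
    mul a b ∈ LinearMap.ker (f ^ n) :=
  hn ▸ pow_add_apply_mul_eq_zero hf ha hb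

end Derivation

lemma exists_isMaxSubalg_le [FiniteDimensional F A] {E : Submodule F A}
    (hE : ∀ u ∈ E, ∀ v ∈ E, mul u v ∈ E) (hE_ne : E ≠ ⊤) : ∃ M, IsMaxSubalg mul M ∧ E ≤ M := by
  obtain ⟨M, ⟨hM, hEM, hM_ne⟩, hmax⟩ := wellFounded_gt.has_min
    {W : Submodule F A | (∀ u ∈ W, ∀ v ∈ W, mul u v ∈ W) ∧ E ≤ W ∧ W ≠ ⊤} ⟨E, hE, le_rfl, hE_ne⟩
  refine ⟨M, ⟨hM, hM_ne, fun W hW hMW => ?_⟩, hEM⟩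
  by_contra hW_ne
  exact hmax W ⟨hW, hEM.trans hMW.le, hW_ne⟩ hMW

lemma eq_top_of_sup_eq_top_of_le_frattini [FiniteDimensional F A] {V E : Submodule F A}
    (hV : ∀ M, IsMaxSubalg mul M → V ≤ M) (hE : ∀ u ∈ E, ∀ v ∈ E, mul u v ∈ E)
    (hVE : V ⊔ E = ⊤) : E = ⊤ := by
  by_contra hE_ne
  obtain ⟨M, hM, hEM⟩ := exists_isMaxSubalg_le mul hE hE_ne
  exact hM.2.1 (top_le_iff.mp (hVE ▸ sup_le (hV M hM) hEM))

lemma isNilpotent_of_range_pow_le_frattini [FiniteDimensional F A] {f : Module.End F A}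
    (hf : ∀ a b, f (mul a b) = mul (f a) b + mul a (f b)) {V : Submodule F A}
    (hV : ∀ M, IsMaxSubalg mul M → V ≤ M) {n : ℕ} (hn : LinearMap.range (f ^ n) ≤ V) :
    IsNilpotent f := by
  -- for large `m`, `A = ker fᵐ ⊕ range fᵐ` (Fitting) and `ker fᵐ = ker f²ᵐ`
  obtain ⟨N, hN⟩ := Filter.eventually_atTop.mp
    (f.eventually_isCompl_ker_pow_range_pow.and f.eventually_iSup_ker_pow_eq)
  let m := max N n
  have hker : LinearMap.ker (f ^ (m + m)) = LinearMap.ker (f ^ m) := by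
    rw [← (hN m le_sup_left).2, (hN (m + m) (by omega)).2]
  have hrange : LinearMap.range (f ^ m) ≤ V :=
    le_trans (f.iterateRange.monotone (le_max_right N n)) hn
  have hfit : V ⊔ LinearMap.ker (f ^ m) = ⊤ := by
    rw [eq_top_iff, ← (hN m le_sup_left).1.sup_eq_top, sup_comm]
    exact sup_le_sup_right hrange _
  have hker_top : LinearMap.ker (f ^ m) = ⊤ := eq_top_of_sup_eq_top_of_le_frattini mul hV
    (fun a ha b hb => mul_mem_ker_pow hf hker ha hb) hfit
  exact ⟨m, LinearMap.ker_eq_top.mp hker_top⟩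

section Engel

attribute [local instance] LieRing.ofAssociativeRing

variable {mul} {U : Submodule F A}

def leftMulOn (hU : ∀ u ∈ U, ∀ v ∈ U, mul u v ∈ U) : U →ₗ[F] Module.End F U where
  toFun u := (mul u).restrict (hU u u.2)
  map_add' u v := by ext; simp
  map_smul' t u := by ext; simp

lemma coe_leftMulOn_apply (hU : ∀ u ∈ U, ∀ v ∈ U, mul u v ∈ U) (u x : U) :
    (leftMulOn hU u x : A) = mul u x :=
  rfl

lemma lie_leftMulOn (hU : ∀ u ∈ U, ∀ v ∈ U, mul u v ∈ U)
    (leibniz : ∀ a b c : A, mul a (mul b c) = mul (mul a b) c + mul b (mul a c)) (u v : U) :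
    ⁅leftMulOn hU u, leftMulOn hU v⁆ = leftMulOn hU ⟨mul u v, hU _ u.2 _ v.2⟩ := by
  ext x
  simp only [Ring.lie_def, LinearMap.sub_apply, Module.End.mul_apply, Submodule.coe_sub,
    coe_leftMulOn_apply, leibniz u v x]
  abel

def leftMulLieSubalgebra (hU : ∀ u ∈ U, ∀ v ∈ U, mul u v ∈ U)
    (leibniz : ∀ a b c : A, mul a (mul b c) = mul (mul a b) c + mul b (mul a c)) :
    LieSubalgebra F (Module.End F U) :=
  { LinearMap.range (leftMulOn hU) with
    lie_mem' := by
      rintro _ _ ⟨u, rfl⟩ ⟨v, rfl⟩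
      exact ⟨_, (lie_leftMulOn hU leibniz u v).symm⟩ }

lemma lcsIn_le_map_lowerCentralSeries (hU : ∀ u ∈ U, ∀ v ∈ U, mul u v ∈ U)
    (leibniz : ∀ a b c : A, mul a (mul b c) = mul (mul a b) c + mul b (mul a c)) (j : ℕ) :
    lcsIn mul U j ≤ (LieModule.lowerCentralSeries F (leftMulLieSubalgebra hU leibniz) U j :
      Submodule F U).map U.subtype := by
  induction j with
  | zero => simp [lcsIn]
  | succ j ih =>
    refine lcsIn_succ_le mul fun a ha _ hb => ?_
    obtain ⟨b, hb', rfl⟩ := Submodule.mem_map.mp (ih hb)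
    let x : leftMulLieSubalgebra hU leibniz := ⟨leftMulOn hU ⟨a, ha⟩, ⟨a, ha⟩, rfl⟩
    refine Submodule.mem_map.mpr ⟨⁅x, b⁆, ?_, rfl⟩
    rw [LieModule.lowerCentralSeries_succ]
    exact LieSubmodule.lie_mem_lie (LieSubmodule.mem_top x) hb'

theorem exists_lcsIn_eq_bot_of_isNilpotent_mul [FiniteDimensional F A]
    (hU : ∀ u ∈ U, ∀ v ∈ U, mul u v ∈ U)
    (leibniz : ∀ a b c : A, mul a (mul b c) = mul (mul a b) c + mul b (mul a c))
    (hnil : ∀ u ∈ U, IsNilpotent (mul u)) : ∃ k, lcsIn mul U k = ⊥ := by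
  have : LieModule.IsNilpotent (leftMulLieSubalgebra hU leibniz) U := by
    rw [LieModule.isNilpotent_iff_forall' (R := F)]
    rintro ⟨_, u, rfl⟩
    obtain ⟨n, hn⟩ := hnil u u.2
    refine ⟨n, LinearMap.ext fun x => Subtype.ext ?_⟩
    show ((mul u).restrict (hU u u.2) ^ n) x = (0 : A)
    rw [Module.End.pow_restrict, LinearMap.coe_restrict_apply, hn, LinearMap.zero_apply]
  obtain ⟨k, hk⟩ := (LieModule.isNilpotent_iff F (leftMulLieSubalgebra hU leibniz) U).mp this
  refine ⟨k, eq_bot_iff.mpr ?_⟩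
  simpa [hk] using lcsIn_le_map_lowerCentralSeries hU leibniz k

end Engel

end LeibnizAlgebra

theorem nilpotent_of_subnormal_frattini_general {F A : Type*} [Field F] [AddCommGroup A]
    [Module F A] [FiniteDimensional F A]
    (mul : A →ₗ[F] A →ₗ[F] A)
    (leibniz : ∀ a b c : A, mul a (mul b c) = mul (mul a b) c + mul b (mul a c))
    (U : Submodule F A) (hU : ∀ u ∈ U, ∀ v ∈ U, mul u v ∈ U)
    -- `U` is right subnormal in `A`:
    (hsub : ∃ (k : ℕ) (c : ℕ → Submodule F A), c 0 = ⊤ ∧ c k = U ∧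
      (∀ i, ∀ u ∈ c i, ∀ v ∈ c i, mul u v ∈ c i) ∧
      ∀ i < k, c (i + 1) ≤ c i ∧ ∀ x ∈ c (i + 1), ∀ y ∈ c i, mul x y ∈ c (i + 1))
    (V : Submodule F A)
    -- `V` is contained in the Frattini subalgebra of `A`:
    (hVfrat : ∀ M : Submodule F A, IsMaxSubalg mul M → V ≤ M)
    -- `U/V` is nilpotent:
    (hUV : ∃ r, lcsIn mul U r ≤ V) :
    ∃ k, lcsIn mul U k = ⊥ := by
  obtain ⟨k, c, hc0, rfl, -, hc⟩ := hsub
  obtain ⟨r, hr⟩ := hUV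
  refine LeibnizAlgebra.exists_lcsIn_eq_bot_of_isNilpotent_mul hU leibniz fun u hu => ?_
  have hrange : LinearMap.range ((mul u) ^ (r + k)) ≤ V := by
    rintro _ ⟨x, rfl⟩
    have hx : ((mul u) ^ k) x ∈ c k :=
      LeibnizAlgebra.pow_apply_mem_of_rightIdeal_chain mul hc hu (hc0 ▸ Submodule.mem_top) k le_rfl
    rw [pow_add, Module.End.mul_apply]
    exact hr (LeibnizAlgebra.pow_apply_mem_lcsIn mul hu hx r)
  exact LeibnizAlgebra.isNilpotent_of_range_pow_le_frattini mul (leibniz u) hVfrat hrange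

/-- a right-subnormal subalgebra `U` with an ideal `V ⊆ Φ(A)` such that
`U/V` is nilpotent is itself nilpotent. -/
theorem nilpotent_of_subnormal_frattini {F A : Type*} [Field F] [AddCommGroup A]
    [Module F A] [FiniteDimensional F A]
    (mul : A →ₗ[F] A →ₗ[F] A)
    (leibniz : ∀ a b c : A, mul a (mul b c) = mul (mul a b) c + mul b (mul a c))
    (U : Submodule F A) (hU : ∀ u ∈ U, ∀ v ∈ U, mul u v ∈ U)
    -- `U` is right subnormal in `A`:
    (hsub : ∃ (k : ℕ) (c : ℕ → Submodule F A), c 0 = ⊤ ∧ c k = U ∧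
      (∀ i, ∀ u ∈ c i, ∀ v ∈ c i, mul u v ∈ c i) ∧
      ∀ i < k, c (i + 1) ≤ c i ∧ ∀ x ∈ c (i + 1), ∀ y ∈ c i, mul x y ∈ c (i + 1))
    (V : Submodule F A) (hVU : V ≤ U)
    -- `V` is an ideal of `U`:
    (hVid : ∀ u ∈ U, ∀ v ∈ V, mul u v ∈ V ∧ mul v u ∈ V)
    -- `V` is contained in the Frattini subalgebra of `A`:
    (hVfrat : ∀ M : Submodule F A, IsMaxSubalg mul M → V ≤ M)
    -- `U/V` is nilpotent:
    (hUV : ∃ r, lcsIn mul U r ≤ V) :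
    ∃ k, lcsIn mul U k = ⊥ :=
  nilpotent_of_subnormal_frattini_general mul leibniz U hU hsub V hVfrat hUV
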